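/- Let a, b > 0. Then ∫_ℝ ∫_ℝ max(z, 0) · max(w/a − z/b, 0) · φ(z) φ(w) dz dw = (1/(2bπ)) · (b/a − arctan(b/a)). Equivalently, if Z and W are independent standard normal random variables, then E[Z₊ (W/a − Z/b)₊] = (1/(2bπ))(b/a − arctan(b/a)), where x₊ = max(x, 0). -/

import Mathlib

open Real Set MeasureTheory

/-!
With `c = b / a` and `m = c w`, the weight `(w / a - z / b)₊` equals `(m - z)₊ / b`. The
integrand vanishes for `w ≤ 0`; for `w > 0` the inner integral lives on `0 ≤ z ≤ m`, where
`(z - m) e^{-z²/2}` is a primitive of `(z (m - z) + 1) e^{-z²/2}`; this gives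
`∫ z₊ (m - z)₊ e^{-z²/2} dz = m - ∫₀^m e^{-t²/2} dt`.
In the outer integral, `c w e^{-w²/2}` contributes `c`; for the other term substitute `t = w s`:
`(∫₀^{cw} e^{-t²/2} dt) e^{-w²/2} = ∫₀^c w e^{-(1 + s²) w² / 2} ds`, and after swapping the
integrals the `w`-integral is `1 / (1 + s²)`, whose integral over `[0, c]` is `arctan c`.
-/

theorem integral_Ioi_mul_exp_neg_mul_sq {β : ℝ} (hβ : 0 < β) :
    ∫ x in Ioi (0 : ℝ), x * exp (-β * x ^ 2) = (2 * β)⁻¹ := by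
  have h := integral_mul_cexp_neg_mul_sq (b := (β : ℂ)) (by simpa using hβ)
  apply Complex.ofReal_injective
  rw [← integral_complex_ofReal]
  push_cast
  exact h

theorem integral_mul_sub_mul_exp_neg_sq_div_two (m : ℝ) :
    ∫ z in (0 : ℝ)..m, z * (m - z) * exp (-z ^ 2 / 2)
      = m - ∫ z in (0 : ℝ)..m, exp (-z ^ 2 / 2) := by
  have hderiv : ∀ z, HasDerivAt (fun z => (z - m) * exp (-z ^ 2 / 2))
      (z * (m - z) * exp (-z ^ 2 / 2) + exp (-z ^ 2 / 2)) z := by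
    intro z
    refine (((hasDerivAt_id' z).sub_const m).fun_mul
      ((hasDerivAt_pow 2 z).fun_neg.div_const 2).exp).congr_deriv ?_
    push_cast; ring
  have hint : ∀ f : ℝ → ℝ, Continuous f → IntervalIntegrable f volume 0 m :=
    fun f hf => hf.intervalIntegrable 0 m
  rw [eq_sub_iff_add_eq,
    ← intervalIntegral.integral_add (hint _ (by fun_prop)) (hint _ (by fun_prop)),
    intervalIntegral.integral_eq_sub_of_hasDerivAt (fun z _ => hderiv z) (hint _ (by fun_prop))]
  simp

theorem integrable_mul_exp_neg_sq_div_two : Integrable fun x : ℝ => x * exp (-x ^ 2 / 2) := by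
  convert integrable_mul_exp_neg_mul_sq (b := 2⁻¹) (by norm_num) using 4
  ring

theorem integral_Ioi_mul_exp_neg_sq_div_two : ∫ x in Ioi (0 : ℝ), x * exp (-x ^ 2 / 2) = 1 := by
  convert integral_Ioi_mul_exp_neg_mul_sq (β := 2⁻¹) (by norm_num) using 3 <;> ring_nf

theorem posPart_mul_posPart_sub_eq_zero {m z : ℝ} (h : z ≤ 0 ∨ m ≤ z) :
    max z 0 * max (m - z) 0 = 0 := by
  rcases h with h | h
  · rw [max_eq_right h, zero_mul]
  · rw [max_eq_right (sub_nonpos.mpr h), mul_zero]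

theorem integral_posPart_mul_posPart_sub_mul_exp_neg_sq_div_two {m : ℝ} (hm : 0 ≤ m) :
    ∫ z, max z 0 * max (m - z) 0 * exp (-z ^ 2 / 2)
      = m - ∫ z in (0 : ℝ)..m, exp (-z ^ 2 / 2) := by
  have hsupp :
      Function.support (fun z => max z 0 * max (m - z) 0 * exp (-z ^ 2 / 2)) ⊆ Ioc 0 m := by
    intro z hz
    by_contra hz'
    rw [mem_Ioc, not_and_or, not_lt, not_le] at hz'
    exact hz (by simp only [posPart_mul_posPart_sub_eq_zero (hz'.imp_right le_of_lt), zero_mul])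
  rw [← intervalIntegral.integral_eq_integral_of_support_subset hsupp,
    ← integral_mul_sub_mul_exp_neg_sq_div_two]
  refine intervalIntegral.integral_congr fun z hz => ?_
  rw [uIcc_of_le hm] at hz
  simp only [max_eq_left hz.1, max_eq_left (sub_nonneg.mpr hz.2)]

theorem intervalIntegral_exp_neg_sq_div_two_mul_exp (c w : ℝ) :
    (∫ t in (0 : ℝ)..c * w, exp (-t ^ 2 / 2)) * exp (-w ^ 2 / 2)
      = ∫ s in (0 : ℝ)..c, w * exp (-((1 + s ^ 2) / 2) * w ^ 2) := by
  rcases eq_or_ne w 0 with rfl | hw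
  · simp
  have hsubst : ∫ t in (0 : ℝ)..c * w, exp (-t ^ 2 / 2)
      = w * ∫ s in (0 : ℝ)..c, exp (-(w * s) ^ 2 / 2) := by
    rw [intervalIntegral.integral_comp_mul_left (fun t => exp (-t ^ 2 / 2)) hw, smul_eq_mul,
      mul_inv_cancel_left₀ hw, mul_zero, mul_comm c]
  rw [hsubst, mul_assoc, ← intervalIntegral.integral_mul_const,
    ← intervalIntegral.integral_const_mul]
  congr! 2 with s
  rw [← exp_add]
  ring_nf

theorem integrable_intervalIntegral_exp_neg_sq_div_two_mul_exp (c : ℝ) :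
    Integrable fun w => (∫ t in (0 : ℝ)..c * w, exp (-t ^ 2 / 2)) * exp (-w ^ 2 / 2) := by
  have hdom : Integrable fun w : ℝ => c * w * exp (-w ^ 2 / 2) := by
    simpa only [mul_assoc] using integrable_mul_exp_neg_sq_div_two.const_mul c
  have hcont : Continuous fun y => ∫ t in (0 : ℝ)..y, exp (-t ^ 2 / 2) :=
    intervalIntegral.continuous_primitive
      (fun _ _ => (by fun_prop : Continuous _).intervalIntegrable _ _) 0
  refine hdom.mono ((hcont.comp (continuous_const_mul c)).mul (by fun_prop)).aestronglyMeasurable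
    (ae_of_all _ fun w => ?_)
  have hE : ‖∫ t in (0 : ℝ)..c * w, exp (-t ^ 2 / 2)‖ ≤ ‖c * w‖ := by
    simpa using intervalIntegral.norm_integral_le_of_norm_le_const (C := 1) (a := 0) (b := c * w)
      (f := fun t => exp (-t ^ 2 / 2)) fun t _ => by
        rw [norm_of_nonneg (exp_pos _).le, exp_le_one_iff]
        nlinarith [sq_nonneg t]
  rw [norm_mul, norm_mul]
  exact mul_le_mul_of_nonneg_right hE (norm_nonneg _)

theorem integral_Ioi_intervalIntegral_exp_neg_sq_div_two_mul_exp {c : ℝ} (hc : 0 ≤ c) :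
    ∫ w in Ioi (0 : ℝ), (∫ t in (0 : ℝ)..c * w, exp (-t ^ 2 / 2)) * exp (-w ^ 2 / 2)
      = arctan c := by
  have hprod : Integrable (Function.uncurry fun w s : ℝ => w * exp (-((1 + s ^ 2) / 2) * w ^ 2))
      ((volume.restrict (Ioi 0)).prod (volume.restrict (Ioc 0 c))) := by
    have hdom := (integrable_mul_exp_neg_sq_div_two.integrableOn (s := Ioi 0)).mul_prod
      (integrable_const (1 : ℝ) (μ := volume.restrict (Ioc 0 c)))
    refine hdom.mono (by fun_prop) (ae_of_all _ fun ⟨w, s⟩ => ?_)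
    simp only [Function.uncurry_apply_pair, mul_one, norm_mul, norm_of_nonneg (exp_pos _).le]
    gcongr
    nlinarith [sq_nonneg s, sq_nonneg w]
  calc ∫ w in Ioi (0 : ℝ), (∫ t in (0 : ℝ)..c * w, exp (-t ^ 2 / 2)) * exp (-w ^ 2 / 2)
      = ∫ w in Ioi (0 : ℝ), ∫ s in Ioc 0 c, w * exp (-((1 + s ^ 2) / 2) * w ^ 2) := by
        simp only [intervalIntegral_exp_neg_sq_div_two_mul_exp, intervalIntegral.integral_of_le hc]
    _ = ∫ s in Ioc 0 c, ∫ w in Ioi (0 : ℝ), w * exp (-((1 + s ^ 2) / 2) * w ^ 2) :=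
        integral_integral_swap hprod
    _ = ∫ s in (0 : ℝ)..c, (1 + s ^ 2)⁻¹ := by
        rw [intervalIntegral.integral_of_le hc]
        congr! 2 with s
        rw [integral_Ioi_mul_exp_neg_mul_sq (by positivity)]
        ring
    _ = arctan c := by simp [integral_inv_one_add_sq]

theorem integral_Ioi_sub_intervalIntegral_exp_neg_sq_div_two_mul_exp {c : ℝ} (hc : 0 ≤ c) :
    ∫ w in Ioi (0 : ℝ), (c * w - ∫ t in (0 : ℝ)..c * w, exp (-t ^ 2 / 2)) * exp (-w ^ 2 / 2)
      = c - arctan c := by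
  simp only [sub_mul, mul_assoc]
  rw [integral_sub (integrable_mul_exp_neg_sq_div_two.const_mul c).integrableOn
      (integrable_intervalIntegral_exp_neg_sq_div_two_mul_exp c).integrableOn,
    integral_const_mul, integral_Ioi_mul_exp_neg_sq_div_two, mul_one,
    integral_Ioi_intervalIntegral_exp_neg_sq_div_two_mul_exp hc]

theorem expectation_posPart_gaussian
    (a b : ℝ) (ha : 0 < a) (hb : 0 < b) :
    ∫ w : ℝ, ∫ z : ℝ,
      max z 0 * max (w / a - z / b) 0 *
        (Real.exp (-z^2 / 2) / Real.sqrt (2 * π)) *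
        (Real.exp (-w^2 / 2) / Real.sqrt (2 * π))
    = (1 / (2 * b * π)) * (b / a - Real.arctan (b / a)) := by
  set c := b / a with hc
  have hcpos : 0 < c := div_pos hb ha
  set G : ℝ → ℝ := fun m => ∫ z, max z 0 * max (m - z) 0 * exp (-z ^ 2 / 2)
  have hinner : ∀ w : ℝ, ∫ z : ℝ, max z 0 * max (w / a - z / b) 0 *
      (exp (-z ^ 2 / 2) / √(2 * π)) * (exp (-w ^ 2 / 2) / √(2 * π))
      = G (c * w) * exp (-w ^ 2 / 2) / (2 * b * π) := by
    intro w
    have hscale : ∀ z, max (w / a - z / b) 0 = max (c * w - z) 0 / b := fun z => by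
      rw [← max_div_div_right hb.le, zero_div, hc]
      field_simp
    simp only [G, hscale, ← integral_mul_const, ← integral_div]
    congr 1 with z
    field_simp
    rw [sq_sqrt (by positivity)]
    ring
  have hvanish : ∀ w ∉ Ioi (0 : ℝ), G (c * w) * exp (-w ^ 2 / 2) = 0 := fun w hw => by
    have hcw : c * w ≤ 0 := mul_nonpos_of_nonneg_of_nonpos hcpos.le (not_lt.mp hw)
    have hzero : ∀ z, max z 0 * max (c * w - z) 0 = 0 := fun z =>
      posPart_mul_posPart_sub_eq_zero ((le_or_gt z 0).imp_right (hcw.trans ·.le))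
    simp only [G, hzero, zero_mul, integral_zero]
  have hpos : ∀ w ∈ Ioi (0 : ℝ), G (c * w) * exp (-w ^ 2 / 2)
      = (c * w - ∫ t in (0 : ℝ)..c * w, exp (-t ^ 2 / 2)) * exp (-w ^ 2 / 2) := fun w hw => by
    simp only [G, integral_posPart_mul_posPart_sub_mul_exp_neg_sq_div_two (mul_pos hcpos hw).le]
  simp only [hinner]
  rw [integral_div, ← setIntegral_eq_integral_of_forall_compl_eq_zero hvanish,
    setIntegral_congr_fun measurableSet_Ioi hpos,
    integral_Ioi_sub_intervalIntegral_exp_neg_sq_div_two_mul_exp hcpos.le]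
  ring
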